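/- arXiv:2108.04160 — 6 statements merged into one kernel-verified Lean document; each statement's English description precedes it below -/
import Mathlib

section
/- Linear disjointness satisfies transitivity: for fields C ⊆ A ∩ B and B ⊆ D inside a common field, if A is linearly disjoint from B over C and the compositum A.B is linearly disjoint from D over B, then A is linearly disjoint from D over C. -/
/-- `A` (a subset of `K`) is linearly disjoint from the subfield `B` over the subfield `C`:
every tuple of elements of `A` that is linearly independent over `C` is linearly
independent over `B`. -/
def LinDisjS (K : Type*) [Field K] (A : Set K) (B C : Subfield K) : Prop :=
  ∀ (n : ℕ) (a : Fin n → K), (∀ i, a i ∈ A) →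
    LinearIndependent C a → LinearIndependent B a

/-- Linear disjointness of the subfield `A` from `B` over `C`. -/
def LinDisj (K : Type*) [Field K] (A B C : Subfield K) : Prop :=
  LinDisjS K (A : Set K) B C

/-- Transitivity of linear disjointness. -/
theorem stmt2 (K : Type*) [Field K] (A B C D : Subfield K) (hCA : C ≤ A) (hCB : C ≤ B)
    (hBD : B ≤ D) (h1 : LinDisj K A B C) (h2 : LinDisj K (A ⊔ B) D B) :
    LinDisj K A D C := by
  intro n a ha hC
  exact h2 n a (fun i => SetLike.le_def.mp le_sup_left (ha i)) (h1 n a ha hC)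
end

section
/- Linear disjointness satisfies base monotonicity: for fields C ⊆ A ∩ B and B ⊆ D inside a common field, if A is linearly disjoint from D over C, then the compositum A.B is linearly disjoint from D over B. -/
set_option synthInstance.maxHeartbeats 1000000
set_option maxHeartbeats 2000000

theorem closure_le_span_aux (K : Type*) [Field K] (A B : Subfield K) (x : K)
    (hx : x ∈ Subring.closure (↑A ∪ ↑B : Set K)) :
    x ∈ Submodule.span ↥B (↑A : Set K) := by
  have h1 : Subring.closure (↑A ∪ ↑B : Set K) ≤ (Algebra.adjoin ↥B (↑A : Set K)).toSubring := by
    rw [Subring.closure_le]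
    rintro y (hy | hy)
    · exact Algebra.subset_adjoin hy
    · exact Subalgebra.algebraMap_mem _ (⟨y, hy⟩ : ↥B)
  have h2 : x ∈ Subalgebra.toSubmodule (Algebra.adjoin ↥B (↑A : Set K)) := h1 hx
  rw [Algebra.adjoin_eq_span] at h2
  refine Submodule.span_le.2 ?_ h2
  intro y hy
  refine Submodule.subset_span (show y ∈ (A : Set K) from ?_)
  induction hy using Submonoid.closure_induction with
  | mem z hz => exact hz
  | one => exact one_mem A
  | mul a b _ _ ha hb => exact mul_mem ha hb

theorem key_ext_aux {K : Type*} [Field K] (B D : Subfield K) {n m : ℕ}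
    (b : Fin n → Fin m → ↥B) (hb : LinearIndependent ↥B b) :
    LinearIndependent ↥D (fun i (k : Fin m) => ((b i k : K))) := by
  set ℓ : (Fin n → ↥B) →ₗ[↥B] (Fin m → ↥B) :=
    ∑ i : Fin n, LinearMap.smulRight (LinearMap.proj i) (b i) with hℓdef
  have hℓ : ∀ c, ℓ c = ∑ i : Fin n, c i • b i := by
    intro c
    simp [hℓdef, LinearMap.sum_apply]
  have hker : LinearMap.ker ℓ = ⊥ := by
    rw [LinearMap.ker_eq_bot']
    intro c hc
    rw [hℓ] at hc
    funext i
    exact Fintype.linearIndependent_iff.1 hb c hc i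
  obtain ⟨g, hg⟩ := LinearMap.exists_leftInverse_of_injective ℓ hker
  have hgb : ∀ i, g (b i) = Pi.single i (1 : ↥B) := by
    intro i
    have h1 : ℓ (Pi.single i (1 : ↥B)) = b i := by
      rw [hℓ]
      simp [Pi.single_apply, ite_smul, Finset.sum_ite_eq']
    calc g (b i) = (g ∘ₗ ℓ) (Pi.single i 1) := by rw [LinearMap.comp_apply, h1]
    _ = Pi.single i 1 := by rw [hg]; rfl
  set gK : (Fin m → K) →ₗ[↥D] (Fin n → K) :=
    { toFun := fun w i => ∑ j : Fin m, ((g (Pi.single j 1) i : K)) * w j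
      map_add' := by intro w w'; funext i; simp [mul_add, Finset.sum_add_distrib]
      map_smul' := by
        intro d w
        funext i
        show _ = (d : K) * _
        simp only [Pi.smul_apply]
        show ∑ j : Fin m, _ * ((d : K) * w j) = _
        rw [Finset.mul_sum]
        congr 1; funext j; ring } with hgKdef
  have hcomp : (⇑gK ∘ fun i (k : Fin m) => ((b i k : K))) =
      fun i (i' : Fin n) => (((Pi.single i (1 : ↥B) : Fin n → ↥B) i' : K)) := by
    funext i i'
    show ∑ j : Fin m, ((g (Pi.single j 1) i' : K)) * (b i j : K) = _
    have hbi : b i = ∑ j : Fin m, b i j • (Pi.single j (1 : ↥B) : Fin m → ↥B) := by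
      funext j'
      simp [Pi.single_apply, Finset.sum_apply, mul_ite, Finset.sum_ite_eq']
    have : (g (b i)) i' = ∑ j : Fin m, b i j * (g (Pi.single j 1)) i' := by
      conv_lhs => rw [hbi]
      rw [map_sum]
      simp [Finset.sum_apply]
    rw [← hgb i, this]
    push_cast
    congr 1; funext j; ring
  refine LinearIndependent.of_comp gK ?_
  rw [hcomp]
  rw [Fintype.linearIndependent_iff]
  intro c hc i
  have := congrFun hc i
  simp only [Finset.sum_apply, Pi.smul_apply, Pi.zero_apply] at this
  have h2 : ∀ i' : Fin n, c i' • (((Pi.single i' (1 : ↥B) : Fin n → ↥B) i : K)) =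
      if i = i' then (c i' : K) else 0 := by
    intro i'
    show (c i' : K) * _ = _
    rw [Pi.single_apply]
    split <;> simp_all
  rw [Finset.sum_congr rfl (fun i' _ => h2 i'), Finset.sum_ite_eq] at this
  simp at this
  exact Subtype.ext (by simpa using this)

theorem span_mono_base_aux {K : Type*} [Field K] {C B : Subfield K} (hCB : C ≤ B) (t : Set K)
    {w : K} (hw : w ∈ Submodule.span ↥C t) : w ∈ Submodule.span ↥B t := by
  induction hw using Submodule.span_induction with
  | mem z hz => exact Submodule.subset_span hz
  | zero => exact zero_mem _
  | add a b _ _ ha hb => exact add_mem ha hb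
  | smul c w _ ih => exact Submodule.smul_mem _ (⟨(c : K), hCB c.2⟩ : ↥B) ih

/-- Base monotonicity of linear disjointness. -/
theorem stmt3 (K : Type*) [Field K] (A B C D : Subfield K) (hCA : C ≤ A) (hCB : C ≤ B)
    (hBD : B ≤ D) (h : LinDisj K A D C) : LinDisj K (A ⊔ B) D B := by
  classical
  intro n a hmem ha
  have hne : ∀ i, a i ≠ 0 := fun i => ha.ne_zero i
  -- write each `a i` as a quotient of elements of the subring generated by `A ∪ B`
  have hrep : ∀ i, ∃ y ∈ Subring.closure (↑A ∪ ↑B : Set K),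
      ∃ z ∈ Subring.closure (↑A ∪ ↑B : Set K), z ≠ 0 ∧ a i = y / z := by
    intro i
    have hmem' : a i ∈ Subfield.closure (↑A ∪ ↑B : Set K) := by
      have := hmem i
      rwa [show (A ⊔ B : Subfield K) = Subfield.closure (↑A ∪ ↑B : Set K) by
        rw [Subfield.closure_union, Subfield.closure_eq, Subfield.closure_eq]] at this
    obtain ⟨y, hy, z, hz, hyz⟩ := Subfield.mem_closure_iff.1 hmem'
    refine ⟨y, hy, z, hz, ?_, hyz.symm⟩
    rintro rfl
    rw [div_zero] at hyz
    exact hne i hyz.symm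
  choose y hy z hz hzne hdiv using hrep
  set q : K := ∏ i, z i with hq
  have hqne : q ≠ 0 := Finset.prod_ne_zero_iff.2 fun i _ => hzne i
  set x : Fin n → K := fun i => q * a i with hxdef
  have hxmem : ∀ i, x i ∈ Submodule.span ↥B (↑A : Set K) := by
    intro i
    apply closure_le_span_aux
    have hxi : x i = y i * ∏ i' ∈ Finset.univ.erase i, z i' := by
      rw [hxdef]
      simp only
      have hzi := hzne i
      rw [hdiv i, hq, ← Finset.mul_prod_erase Finset.univ z (Finset.mem_univ i)]
      field_simp
    rw [hxi]
    exact mul_mem (hy i) (prod_mem fun i' _ => hz i')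
  -- a finite subset of `A` spanning all the `x i` over `B`
  have hfin : ∀ i, ∃ T : Finset K, ↑T ⊆ (↑A : Set K) ∧
      x i ∈ Submodule.span ↥B (↑T : Set K) :=
    fun i => Submodule.mem_span_finite_of_mem_span (hxmem i)
  choose T hT hxT using hfin
  set s : Finset K := Finset.univ.biUnion T with hsdef
  have hsA : (↑s : Set K) ⊆ (↑A : Set K) := by
    intro v hv
    obtain ⟨i, -, hvi⟩ := Finset.mem_biUnion.1 (Finset.mem_coe.1 hv)
    exact hT i (Finset.mem_coe.2 hvi)
  have hxs : ∀ i, x i ∈ Submodule.span ↥B (↑s : Set K) := by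
    intro i
    refine Submodule.span_mono ?_ (hxT i)
    intro v hv
    exact Finset.mem_coe.2 (Finset.mem_biUnion.2 ⟨i, Finset.mem_univ i, Finset.mem_coe.1 hv⟩)
  -- a `C`-basis of the `C`-span of `s`, inside `A`
  obtain ⟨t, hts, hspan, hli⟩ := exists_linearIndependent ↥C (↑s : Set K)
  have htfin : t.Finite := s.finite_toSet.subset hts
  letI : Fintype ↥t := htfin.fintype
  set m : ℕ := Fintype.card ↥t with hmdef
  set e : Fin m → K := fun k => ((Fintype.equivFin ↥t).symm k : K) with hedef
  have heA : ∀ k, e k ∈ A := fun k => hsA (hts ((Fintype.equivFin ↥t).symm k).2)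
  have heC : LinearIndependent ↥C e :=
    hli.comp _ (Fintype.equivFin ↥t).symm.injective
  have heD : LinearIndependent ↥D e := h m e heA heC
  have hrange : Set.range e = t := by
    ext v
    constructor
    · rintro ⟨k, rfl⟩
      exact ((Fintype.equivFin ↥t).symm k).2
    · intro hv
      exact ⟨Fintype.equivFin ↥t ⟨v, hv⟩, by rw [hedef]; simp⟩
  have hst : ∀ i, x i ∈ Submodule.span ↥B (Set.range e) := by
    intro i
    rw [hrange]
    refine Submodule.span_le.2 ?_ (hxs i)
    intro v hv
    have hvC : v ∈ Submodule.span ↥C t := by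
      rw [hspan]
      exact Submodule.subset_span hv
    exact span_mono_base_aux hCB t hvC
  have hcoef : ∀ i, ∃ bc : Fin m → ↥B, ∑ k, bc k • e k = x i :=
    fun i => (Submodule.mem_span_range_iff_exists_fun ↥B).1 (hst i)
  choose bc hbc using hcoef
  -- expand `x i` in terms of `e`
  have hxe : ∀ w : Fin n → K,
      ∑ i, w i * x i = ∑ k, (∑ i, w i * (bc i k : K)) * e k := by
    intro w
    have hxi : ∀ i, x i = ∑ k, (bc i k : K) * e k := by
      intro i
      rw [← hbc i]
      exact Finset.sum_congr rfl fun k _ => rfl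
    calc ∑ i, w i * x i = ∑ i, ∑ k, w i * ((bc i k : K) * e k) := by
          refine Finset.sum_congr rfl fun i _ => ?_
          rw [hxi i, Finset.mul_sum]
    _ = ∑ k, ∑ i, w i * ((bc i k : K) * e k) := Finset.sum_comm
    _ = ∑ k, (∑ i, w i * (bc i k : K)) * e k := by
          refine Finset.sum_congr rfl fun k _ => ?_
          rw [Finset.sum_mul]
          exact Finset.sum_congr rfl fun i _ => by ring
  have hxq : ∀ w : Fin n → K, ∑ i, w i * x i = q * ∑ i, w i * a i := by
    intro w
    rw [Finset.mul_sum]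
    exact Finset.sum_congr rfl fun i _ => by rw [hxdef]; ring
  -- the coefficient vectors are linearly independent over B
  have hbcli : LinearIndependent ↥B bc := by
    rw [Fintype.linearIndependent_iff]
    intro β hβ
    have hβk : ∀ k, ∑ i, (β i : K) * (bc i k : K) = 0 := by
      intro k
      have h' := congrFun hβ k
      simp only [Finset.sum_apply, Pi.smul_apply, Pi.zero_apply, smul_eq_mul] at h'
      exact_mod_cast congrArg (fun u : ↥B => (u : K)) h'
    have h0 : ∑ i, (β i : K) * a i = 0 := by
      have h1 : ∑ i, (β i : K) * x i = 0 := by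
        rw [hxe]
        refine Finset.sum_eq_zero fun k _ => ?_
        rw [hβk k, zero_mul]
      rw [hxq] at h1
      exact (mul_eq_zero.1 h1).resolve_left hqne
    intro i
    exact Fintype.linearIndependent_iff.1 ha β h0 i
  have hbcD := key_ext_aux B D bc hbcli
  -- conclude
  rw [Fintype.linearIndependent_iff]
  intro g hg i
  have hg' : ∑ i, (g i : K) * a i = 0 := hg
  have hx0 : ∑ k, (∑ i, (g i : K) * (bc i k : K)) * e k = 0 := by
    rw [← hxe, hxq, hg', mul_zero]
  set cD : Fin m → ↥D := fun k =>
    ⟨∑ i, (g i : K) * (bc i k : K),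
      sum_mem fun i _ => mul_mem (g i).2 (hBD (bc i k).2)⟩ with hcDdef
  have hsum : ∑ k, cD k • e k = 0 := by
    rw [← hx0]
    exact Finset.sum_congr rfl fun k _ => rfl
  have hcD0 : ∀ k, (cD k : K) = 0 := by
    intro k
    rw [Fintype.linearIndependent_iff.1 heD cD hsum k]
    rfl
  have hfinal : ∑ i', g i' • (fun k => ((bc i' k : K))) = (0 : Fin m → K) := by
    funext k
    simp only [Finset.sum_apply, Pi.smul_apply, Pi.zero_apply, smul_eq_mul]
    exact hcD0 k
  exact Fintype.linearIndependent_iff.1 hbcD g hfinal i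
end

section
/- Local character of linear disjointness: let B be an infinite field inside a larger field, and let a be a finite tuple of elements of the larger field. Then there exists a countable subfield B₀ ⊆ B such that the field B₀(a) is linearly disjoint from B over B₀. -/
open Set

namespace Subfield

variable {K : Type*} [DivisionRing K]

theorem linearIndependent_iff_forall_sum_mul_eq_zero {ι : Type*} [Fintype ι]
    {C : Subfield K} {v : ι → K} :
    LinearIndependent C v ↔ ∀ g : ι → K, (∀ i, g i ∈ C) → ∑ i, g i * v i = 0 → g = 0 := by
  rw [Fintype.linearIndependent_iff]
  constructor
  · intro h g hgC hsum
    funext i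
    have hsum' : ∑ i, (⟨g i, hgC i⟩ : C) • v i = 0 := by simpa [smul_def] using hsum
    simpa using congrArg Subtype.val (h _ hsum' i)
  · intro h g hsum i
    exact Subtype.ext (congrFun (h (fun i => g i) (fun i => (g i).2)
      (by simpa [smul_def] using hsum)) i)

theorem linearIndependent_of_le {ι : Type*} [Fintype ι] {C D : Subfield K} (hCD : C ≤ D)
    {v : ι → K} (hv : LinearIndependent D v) : LinearIndependent C v :=
  linearIndependent_iff_forall_sum_mul_eq_zero.2 fun g hg =>
    linearIndependent_iff_forall_sum_mul_eq_zero.1 hv g fun i => hCD (hg i)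

theorem countable_closure {s : Set K} (hs : s.Countable) : Countable (closure s) := by
  rw [← countable_coe_iff, ← Cardinal.mk_le_aleph0_iff] at hs
  rw [← Cardinal.mk_le_aleph0_iff]
  exact (cardinalMk_closure_le_max s).trans (max_le hs le_rfl)

instance countable_sup (C D : Subfield K) [Countable C] [Countable D] : Countable ↥(C ⊔ D) := by
  rw [← closure_eq C, ← closure_eq D, ← closure_union]
  exact countable_closure ((countable_coe_iff.1 ‹_›).union (countable_coe_iff.1 ‹_›))

instance countable_bot : Countable (⊥ : Subfield K) := by
  rw [← closure_empty]
  exact countable_closure countable_empty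

theorem countable_iSup_of_directed {ι : Type*} [Countable ι] [Nonempty ι] {C : ι → Subfield K}
    (hC : Directed (· ≤ ·) C) [∀ k, Countable (C k)] : Countable ↥(⨆ k, C k) := by
  rw [← SetLike.coe_sort_coe, coe_iSup_of_directed hC, countable_coe_iff]
  exact countable_iUnion fun k => countable_coe_iff.1 (inferInstanceAs (Countable (C k)))

theorem exists_forall_mem_sup_of_forall_mem_iSup_sup {C : ℕ → Subfield K} (hC : Monotone C)
    {A : Subfield K} {n : ℕ} {c : Fin n → K} (hc : ∀ i, c i ∈ (⨆ k, C k) ⊔ A) :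
    ∃ N, ∀ i, c i ∈ C N ⊔ A := by
  have hCA : Monotone fun k => C k ⊔ A := hC.sup monotone_const
  simp only [iSup_sup, mem_iSup_of_directed hCA.directed_le] at hc
  choose k hk using hc
  exact ⟨Finset.univ.sup k, fun i => hCA (Finset.le_sup (Finset.mem_univ i)) (hk i)⟩

end Subfield

open Subfield

section

variable {K : Type*} [Field K]

def WitnessesDependences (A B C D : Subfield K) : Prop :=
  ∀ (n : ℕ) (c : Fin n → K), (∀ i, c i ∈ C ⊔ A) →
    ¬LinearIndependent B c → ¬LinearIndependent D c

theorem exists_countable_witnessesDependences {A B C : Subfield K} [Countable A] [Countable C]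
    (hCB : C ≤ B) :
    ∃ D : Subfield K, C ≤ D ∧ D ≤ B ∧ Countable D ∧ WitnessesDependences A B C D := by
  have hrel : ∀ t : Σ n, Fin n → ↥(C ⊔ A), ∃ g : Fin t.1 → K, (∀ i, g i ∈ B) ∧
      (¬LinearIndependent B (fun i => (t.2 i : K)) → ∑ i, g i * t.2 i = 0 ∧ g ≠ 0) := by
    rintro ⟨n, c⟩
    by_cases hc : LinearIndependent B (fun i => (c i : K))
    · exact ⟨0, fun _ => zero_mem B, fun h => (h hc).elim⟩
    · simp only [linearIndependent_iff_forall_sum_mul_eq_zero, not_forall] at hc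
      obtain ⟨g, hgB, hsum, hg⟩ := hc
      exact ⟨g, hgB, fun _ => ⟨hsum, hg⟩⟩
  choose g hgB hg using hrel
  refine ⟨C ⊔ closure (⋃ t, range (g t)), le_sup_left, sup_le hCB ?_, ?_, ?_⟩
  · rw [closure_le]
    rintro _ ⟨_, ⟨t, rfl⟩, i, rfl⟩
    exact hgB t i
  · have := countable_closure (countable_iUnion fun t => (finite_range (g t)).countable)
    infer_instance
  · intro n c hc hdep
    let t : Σ n, Fin n → ↥(C ⊔ A) := ⟨n, fun i => ⟨c i, hc i⟩⟩
    obtain ⟨hsum, hne⟩ := hg t hdep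
    rw [linearIndependent_iff_forall_sum_mul_eq_zero]
    refine fun h => hne (h _ (fun i => ?_) hsum)
    exact le_sup_right (a := C) (subset_closure (mem_iUnion.2 ⟨t, mem_range_self i⟩))

theorem linDisj_iSup_sup_of_monotone {A B : Subfield K} {C : ℕ → Subfield K} (hC : Monotone C)
    (hstep : ∀ k, WitnessesDependences A B (C k) (C (k + 1))) :
    LinDisj K ((⨆ k, C k) ⊔ A) B (⨆ k, C k) := by
  intro n c hc hind
  obtain ⟨N, hN⟩ := exists_forall_mem_sup_of_forall_mem_iSup_sup hC hc
  by_contra hdep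
  exact hstep N n c hN hdep (linearIndependent_of_le (le_iSup C (N + 1)) hind)

theorem exists_countable_le_linDisj_sup (A B : Subfield K) [Countable A] :
    ∃ B₀ : Subfield K, B₀ ≤ B ∧ Countable B₀ ∧ LinDisj K (B₀ ⊔ A) B B₀ := by
  let Small := {C : Subfield K // C ≤ B ∧ Countable C}
  have hstep : ∀ C : Small, ∃ D : Small, C.1 ≤ D.1 ∧ WitnessesDependences A B C.1 D.1 := by
    rintro ⟨C, hCB, hC⟩
    obtain ⟨D, hCD, hDB, hD, hdep⟩ := exists_countable_witnessesDependences (A := A) hCB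
    exact ⟨⟨D, hDB, hD⟩, hCD, hdep⟩
  choose next hle hdep using hstep
  let S : ℕ → Small := fun k => next^[k] ⟨⊥, bot_le, countable_bot⟩
  have hS : ∀ k, S (k + 1) = next (S k) := fun k => Function.iterate_succ_apply' _ _ _
  have hC : Monotone fun k => (S k).1 := monotone_nat_of_le_succ fun k => hS k ▸ hle (S k)
  have : ∀ k, Countable (S k).1 := fun k => (S k).2.2
  refine ⟨⨆ k, (S k).1, iSup_le fun k => (S k).2.1, countable_iSup_of_directed hC.directed_le,
    linDisj_iSup_sup_of_monotone hC fun k => hS k ▸ hdep (S k)⟩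

end

theorem stmt4_general (K : Type*) [Field K] (B : Subfield K)
    (m : ℕ) (a : Fin m → K) :
    ∃ B₀ : Subfield K, B₀ ≤ B ∧ Countable B₀ ∧
      LinDisj K (B₀ ⊔ Subfield.closure (Set.range a)) B B₀ := by
  have := countable_closure (finite_range a).countable
  exact exists_countable_le_linDisj_sup _ B

/-- Local character of linear disjointness. -/
theorem stmt4 (K : Type*) [Field K] (B : Subfield K) (hB : (B : Set K).Infinite)
    (m : ℕ) (a : Fin m → K) :
    ∃ B₀ : Subfield K, B₀ ≤ B ∧ Countable B₀ ∧
      LinDisj K (B₀ ⊔ Subfield.closure (Set.range a)) B B₀ :=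
  stmt4_general K B m a
end

section
/- Let A, B, C ⊆ K be subfields of a field K with C ⊆ A ∩ B, and let P ⊆ K be a further subfield. Write P_A = A ∩ P. If A is linearly disjoint from P over P_A (A is 'D-closed'), then: the compositum A.P is linearly disjoint from B.P over C.P if and only if A is linearly disjoint from B.P over C.P_A. -/
section Helpers
variable {K : Type*} [Field K]

lemma li_mul_left (F : Subfield K) {n : ℕ} {x : Fin n → K} {d : K} (hd : d ≠ 0)
    (h : LinearIndependent F x) : LinearIndependent F (fun i => d * x i) := by
  rw [Fintype.linearIndependent_iff] at h ⊢
  intro g hg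
  apply h g
  have h0 : d * ∑ i, g i • x i = 0 := by
    rw [Finset.mul_sum, ← hg]
    refine Finset.sum_congr rfl fun i _ => ?_
    simp only [Subfield.smul_def, smul_eq_mul]
    ring
  rcases mul_eq_zero.mp h0 with h' | h'
  · exact absurd h' hd
  · exact h'

/-- The `X`-span of `Y` is closed under multiplication. -/
lemma rspan_mul_mem (X Y : Subfield K) {a b : K}
    (ha : a ∈ Submodule.span X (Y : Set K)) (hb : b ∈ Submodule.span X (Y : Set K)) :
    a * b ∈ Submodule.span X (Y : Set K) := by
  have h := Submodule.mul_mem_mul ha hb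
  rw [Submodule.span_mul_span] at h
  refine Submodule.span_le.mpr ?_ h
  rintro z ⟨u, hu, v, hv, rfl⟩
  exact Submodule.subset_span (mul_mem hu hv)

lemma rspan_one_mem (X Y : Subfield K) : (1 : K) ∈ Submodule.span X (Y : Set K) :=
  Submodule.subset_span Y.one_mem

/-- The `X`-span of `Y` as a subring of `K`. -/
def rsSubring (X Y : Subfield K) : Subring K where
  carrier := ↑(Submodule.span X (Y : Set K))
  one_mem' := rspan_one_mem X Y
  mul_mem' := rspan_mul_mem X Y
  add_mem' := fun h1 h2 => Submodule.add_mem _ h1 h2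
  zero_mem' := Submodule.zero_mem _
  neg_mem' := fun h => Submodule.neg_mem _ h

lemma mem_rsSubring (X Y : Subfield K) {x : K} :
    x ∈ rsSubring X Y ↔ x ∈ Submodule.span X (Y : Set K) := Iff.rfl

lemma mem_sup_div (X Y : Subfield K) {x : K} (hx : x ∈ X ⊔ Y) :
    ∃ y ∈ Submodule.span X (Y : Set K), ∃ z ∈ Submodule.span X (Y : Set K),
      z ≠ 0 ∧ x = y / z := by
  by_cases hx0 : x = 0
  · exact ⟨0, Submodule.zero_mem _, 1, rspan_one_mem X Y, one_ne_zero, by simp [hx0]⟩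
  have hsub : (Subring.closure ((X : Set K) ∪ (Y : Set K)) : Set K) ⊆
      ↑(Submodule.span X (Y : Set K)) := by
    have : Subring.closure ((X : Set K) ∪ (Y : Set K)) ≤ rsSubring X Y := by
      rw [Subring.closure_le]
      rintro z (hz | hz)
      · rw [SetLike.mem_coe, mem_rsSubring]
        have : (⟨z, hz⟩ : X) • (1 : K) ∈ Submodule.span X (Y : Set K) :=
          Submodule.smul_mem _ _ (rspan_one_mem X Y)
        simpa [Subfield.smul_def, smul_eq_mul] using this
      · exact Submodule.subset_span hz
    exact this
  have hx' : x ∈ Subfield.closure ((X : Set K) ∪ (Y : Set K)) := by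
    rwa [Subfield.closure_union, Subfield.closure_eq, Subfield.closure_eq]
  obtain ⟨y, hy, z, hz, hyz⟩ := Subfield.mem_closure_iff.mp hx'
  have hz0 : z ≠ 0 := by
    rintro rfl
    rw [div_zero] at hyz
    exact hx0 hyz.symm
  exact ⟨y, hsub hy, z, hsub hz, hz0, hyz.symm⟩

lemma common_denom (X Y : Subfield K) {n : ℕ} (x : Fin n → K) (hx : ∀ i, x i ∈ X ⊔ Y) :
    ∃ d : K, d ≠ 0 ∧ ∀ i, d * x i ∈ Submodule.span X (Y : Set K) := by
  choose y hy z hz hz0 hxi using fun i => mem_sup_div X Y (hx i)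
  refine ⟨∏ i, z i, Finset.prod_ne_zero_iff.mpr fun i _ => hz0 i, fun i => ?_⟩
  have key : (∏ j, z j) * x i = (∏ j ∈ Finset.univ.erase i, z j) * y i := by
    rw [hxi i, ← Finset.mul_prod_erase Finset.univ z (Finset.mem_univ i)]
    field_simp [hz0 i]
  rw [key]
  have hprod : (∏ j ∈ Finset.univ.erase i, z j) ∈ rsSubring X Y :=
    Subring.prod_mem _ fun j _ => hz j
  exact rspan_mul_mem X Y hprod (hy i)

lemma rep_of_mem_span (X Y : Subfield K) {x : K}
    (hx : x ∈ Submodule.span X (Y : Set K)) :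
    ∃ c : K →₀ X, (↑c.support : Set K) ⊆ (Y : Set K) ∧
      x = ∑ p ∈ c.support, (c p : K) * p := by
  obtain ⟨c, hsupp, hsum⟩ := Submodule.mem_span_set.mp hx
  refine ⟨c, hsupp, ?_⟩
  rw [← hsum, Finsupp.sum]
  refine Finset.sum_congr rfl fun p _ => ?_
  simp [Subfield.smul_def, smul_eq_mul, mul_comm]

lemma basis_extract (F Y : Subfield K) (hFY : F ≤ Y) (t : Finset K)
    (ht : (t : Set K) ⊆ (Y : Set K)) :
    ∃ (r : ℕ) (q : Fin r → K) (w : K → Fin r → F),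
      (∀ j, q j ∈ Y) ∧ LinearIndependent F q ∧
      ∀ p ∈ t, p = ∑ j, (w p j : K) * q j := by
  classical
  set W : Submodule F K := Submodule.span F (t : Set K) with hW
  haveI : FiniteDimensional F W := FiniteDimensional.span_of_finite F t.finite_toSet
  haveI : Module.Free F W := Module.Free.of_divisionRing F W
  let b := Module.finBasis F W
  have hWY : ∀ v : K, v ∈ W → v ∈ Y := by
    intro v hv
    induction hv using Submodule.span_induction with
    | mem p hp => exact ht hp
    | zero => exact Y.zero_mem
    | add a b _ _ ha hb => exact Y.add_mem ha hb
    | smul c a _ h =>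
      rw [Subfield.smul_def, smul_eq_mul]
      exact Y.mul_mem (hFY c.2) h
  refine ⟨_, fun j => ↑(b j), fun p => if hp : p ∈ W then fun j => b.repr ⟨p, hp⟩ j else 0,
    fun j => hWY _ (b j).2, ?_, ?_⟩
  · have := b.linearIndependent.map' W.subtype (Submodule.ker_subtype W)
    exact this
  · intro p hp
    have hpW : p ∈ W := Submodule.subset_span hp
    simp only [dif_pos hpW]
    have := b.sum_repr ⟨p, hpW⟩
    have h2 := congrArg (Subtype.val) this
    simp only [Submodule.coe_sum] at h2 ⊢
    simp only [SetLike.val_smul] at h2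
    simp only [Subfield.smul_def, smul_eq_mul] at h2
    exact h2.symm

lemma lindisj_symm (X Y Z : Subfield K) (hZX : Z ≤ X) (hZY : Z ≤ Y)
    (h : LinDisj K X Y Z) : LinDisj K Y X Z := by
  classical
  intro n y hy hli
  rw [Fintype.linearIndependent_iff] at hli ⊢
  intro g hg
  obtain ⟨r, q, w, hqX, hqli, hrep⟩ := basis_extract Z X hZX
    (Finset.image (fun i => ((g i : K))) Finset.univ)
    (by
      intro p hp
      simp only [Finset.coe_image, Set.mem_image] at hp
      obtain ⟨i, _, rfl⟩ := hp
      exact (g i).2)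
  have hw : ∀ i, (g i : K) = ∑ j, (w (g i) j : K) * q j :=
    fun i => hrep _ (Finset.mem_image_of_mem _ (Finset.mem_univ i))
  have hqY : LinearIndependent Y q := h r q hqX hqli
  have key : ∀ j, ∑ i, (w (g i) j : K) * y i = 0 := by
    rw [Fintype.linearIndependent_iff] at hqY
    intro j
    have h0 : ∑ j', (⟨∑ i, (w (g i) j' : K) * y i,
        sum_mem fun i _ => mul_mem (hZY (w (g i) j').2) (hy i)⟩ : Y) • q j' = 0 := by
      have : ∑ j', (∑ i, (w (g i) j' : K) * y i) * q j' = 0 := by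
        calc ∑ j', (∑ i, (w (g i) j' : K) * y i) * q j'
            = ∑ i, (∑ j', (w (g i) j' : K) * q j') * y i := by
              simp_rw [Finset.sum_mul]
              rw [Finset.sum_comm]
              exact Finset.sum_congr rfl fun i _ => Finset.sum_congr rfl fun j' _ => by ring
          _ = ∑ i, g i • y i := by
              refine Finset.sum_congr rfl fun i _ => ?_
              rw [← hw i, Subfield.smul_def, smul_eq_mul]
          _ = 0 := hg
      simpa [Subfield.smul_def, smul_eq_mul] using this
    have := hqY _ h0 j
    have := congrArg (Subtype.val) this
    simpa using this
  have hw0 : ∀ i j, w (g i) j = 0 := by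
    intro i j
    apply hli (fun i => w (g i) j)
    rw [← key j]
    refine Finset.sum_congr rfl fun i _ => ?_
    rw [Subfield.smul_def, smul_eq_mul]
  intro i
  have : (g i : K) = 0 := by
    rw [hw i]
    simp [hw0 i]
  exact Subtype.ext this

lemma matrix_right_inv {F : Type*} [Field F] {n s : ℕ} (M : Matrix (Fin n) (Fin s) F)
    (hM : LinearIndependent F (fun i => M i)) : ∃ N : Matrix (Fin s) (Fin n) F, M * N = 1 := by
  classical
  rw [← Matrix.mulVec_surjective_iff_exists_right_inverse]
  have hrank : M.rank = n := by
    have := hM.rank_matrix (M := M)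
    simpa using this
  have htop : LinearMap.range M.mulVecLin = ⊤ := by
    apply Submodule.eq_top_of_finrank_eq
    rw [show Module.finrank F ↥(LinearMap.range M.mulVecLin) = M.rank from rfl, hrank,
      Module.finrank_fintype_fun_eq_card, Fintype.card_fin]
  intro v
  obtain ⟨u, hu⟩ := LinearMap.range_eq_top.mp htop v
  exact ⟨u, hu⟩

end Helpers

set_option maxHeartbeats 1000000 in
set_option synthInstance.maxHeartbeats 400000 in
/-- If `A` is D-closed, then `A.P` is linearly disjoint from `B.P` over `C.P` iff
`A` is linearly disjoint from `B.P` over `C.P_A`. -/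
theorem stmt13 (K : Type*) [Field K] (A B C P : Subfield K) (hCA : C ≤ A) (hCB : C ≤ B)
    (hA : LinDisj K A P (A ⊓ P)) :
    LinDisj K (A ⊔ P) (B ⊔ P) (C ⊔ P) ↔ LinDisj K A (B ⊔ P) (C ⊔ A ⊓ P) := by
  classical
  constructor
  · -- forward direction
    intro H n a ha hli
    apply H n a (fun i => SetLike.le_def.mp le_sup_left (ha i))
    -- show `a` is linearly independent over `C ⊔ P`
    rw [Fintype.linearIndependent_iff]
    intro g hg
    obtain ⟨d, hd0, hdg⟩ := common_denom C P (fun i => (g i : K)) (fun i => (g i).2)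
    choose c hcsupp hcrep using fun i => rep_of_mem_span C P (hdg i)
    set t : Finset K := Finset.univ.biUnion (fun i => (c i).support) with ht
    have htP : (t : Set K) ⊆ (P : Set K) := by
      intro p hp
      simp only [ht, Finset.coe_biUnion, Set.mem_iUnion, Finset.mem_coe] at hp
      obtain ⟨i, _, hpi⟩ := hp
      exact hcsupp i hpi
    have hrepT : ∀ i, d * (g i : K) = ∑ p ∈ t, ((c i) p : K) * p := by
      intro i
      rw [hcrep i]
      refine Finset.sum_subset
        (fun p hp => Finset.mem_biUnion.mpr ⟨i, Finset.mem_univ i, hp⟩) ?_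
      intro p _ hp
      rw [Finsupp.notMem_support_iff.mp hp]
      simp
    obtain ⟨r, q, w, hqP, hqli, hqrep⟩ := basis_extract (A ⊓ P) P inf_le_right t htP
    set u : Fin n → Fin r → K := fun i j => ∑ p ∈ t, ((c i) p : K) * (w p j : K) with hu
    have huA : ∀ i j, u i j ∈ A := fun i j =>
      sum_mem fun p _ => mul_mem (hCA (c i p).2) ((Subfield.mem_inf.mp (w p j).2).1)
    have huC : ∀ i j, u i j ∈ (C ⊔ A ⊓ P : Subfield K) := fun i j =>
      sum_mem fun p _ => mul_mem (SetLike.le_def.mp le_sup_left (c i p).2)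
        (SetLike.le_def.mp le_sup_right (w p j).2)
    have hug : ∀ i, d * (g i : K) = ∑ j, u i j * q j := by
      intro i
      rw [hrepT i]
      calc ∑ p ∈ t, ((c i) p : K) * p
          = ∑ p ∈ t, ∑ j, ((c i) p : K) * ((w p j : K) * q j) := by
            refine Finset.sum_congr rfl fun p hp => ?_
            rw [← Finset.mul_sum]
            exact congrArg (fun z => ((c i) p : K) * z) (hqrep p hp)
        _ = ∑ j, u i j * q j := by
            rw [Finset.sum_comm]
            refine Finset.sum_congr rfl fun j _ => ?_
            simp only [hu]
            rw [Finset.sum_mul]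
            exact Finset.sum_congr rfl fun p _ => by ring
    have hqA : LinearIndependent A q :=
      lindisj_symm A P (A ⊓ P) inf_le_left inf_le_right hA r q hqP hqli
    have key : ∀ j, ∑ i, u i j * a i = 0 := by
      rw [Fintype.linearIndependent_iff] at hqA
      intro j
      have h0 : ∑ j', (⟨∑ i, u i j' * a i,
          sum_mem fun i _ => mul_mem (huA i j') (ha i)⟩ : A) • q j' = 0 := by
        have : ∑ j', (∑ i, u i j' * a i) * q j' = 0 := by
          calc ∑ j', (∑ i, u i j' * a i) * q j'
              = ∑ i, (∑ j', u i j' * q j') * a i := by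
                simp_rw [Finset.sum_mul]
                rw [Finset.sum_comm]
                exact Finset.sum_congr rfl fun i _ => Finset.sum_congr rfl fun j' _ => by ring
            _ = ∑ i, (d * (g i : K)) * a i := by
                refine Finset.sum_congr rfl fun i _ => ?_
                rw [hug i]
            _ = d * ∑ i, g i • a i := by
                rw [Finset.mul_sum]
                refine Finset.sum_congr rfl fun i _ => ?_
                rw [Subfield.smul_def, smul_eq_mul]
                ring
            _ = 0 := by rw [hg, mul_zero]
        simpa [Subfield.smul_def, smul_eq_mul] using this
      have := congrArg Subtype.val (hqA _ h0 j)
      simpa using this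
    have hu0 : ∀ i j, u i j = 0 := by
      rw [Fintype.linearIndependent_iff] at hli
      intro i j
      have h0 : ∑ i, (⟨u i j, huC i j⟩ : (C ⊔ A ⊓ P : Subfield K)) • a i = 0 := by
        have := key j
        simpa [Subfield.smul_def, smul_eq_mul] using this
      have := congrArg Subtype.val (hli _ h0 i)
      simpa using this
    intro i
    have hdg0 : d * (g i : K) = 0 := by
      rw [hug i]
      simp [hu0 i]
    have : (g i : K) = 0 := by
      rcases mul_eq_zero.mp hdg0 with h' | h'
      · exact absurd h' hd0
      · exact h'
    exact Subtype.ext this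
  · -- backward direction
    intro h n x hx hli
    obtain ⟨d, hd0, hdx⟩ := common_denom A P x hx
    set x' : Fin n → K := fun i => d * x i with hx'
    have hli' : LinearIndependent (C ⊔ P : Subfield K) x' := li_mul_left _ hd0 hli
    suffices hs : LinearIndependent (B ⊔ P : Subfield K) x' by
      have h2 := li_mul_left (B ⊔ P : Subfield K) (inv_ne_zero hd0) hs
      have heq : (fun i => d⁻¹ * x' i) = x := by
        funext i
        simp only [hx']
        field_simp
      rwa [heq] at h2
    choose c hcsupp hcrep using fun i => rep_of_mem_span A P (hdx i)
    set t : Finset K := Finset.univ.biUnion (fun i => (c i).support) with ht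
    have htP : (t : Set K) ⊆ (P : Set K) := by
      intro p hp
      simp only [ht, Finset.coe_biUnion, Set.mem_iUnion, Finset.mem_coe] at hp
      obtain ⟨i, _, hpi⟩ := hp
      exact hcsupp i hpi
    have hrepT : ∀ i, x' i = ∑ p ∈ t, ((c i) p : K) * p := by
      intro i
      rw [show x' i = d * x i from rfl, hcrep i]
      refine Finset.sum_subset
        (fun p hp => Finset.mem_biUnion.mpr ⟨i, Finset.mem_univ i, hp⟩) ?_
      intro p _ hp
      rw [Finsupp.notMem_support_iff.mp hp]
      simp
    set t' : Finset K := Finset.univ.biUnion (fun i => t.image (fun p => ((c i) p : K))) with ht'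
    have ht'A : (t' : Set K) ⊆ (A : Set K) := by
      intro v hv
      simp only [ht', Finset.coe_biUnion, Set.mem_iUnion, Finset.mem_coe,
        Finset.mem_image] at hv
      obtain ⟨i, _, p, _, rfl⟩ := hv
      exact (c i p).2
    have hF0A : (C ⊔ A ⊓ P : Subfield K) ≤ A := sup_le hCA inf_le_left
    obtain ⟨r, e, w, heA, heli, herep⟩ := basis_extract (C ⊔ A ⊓ P) A hF0A t' ht'A
    have hcw : ∀ i, ∀ p ∈ t, ((c i) p : K) = ∑ k, (w ((c i) p : K) k : K) * e k := by
      intro i p hp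
      exact herep _ (Finset.mem_biUnion.mpr ⟨i, Finset.mem_univ i,
        Finset.mem_image_of_mem _ hp⟩)
    set γ : Fin n → Fin r → K := fun i k => ∑ p ∈ t, (w ((c i) p : K) k : K) * p with hγ
    have hγCP : ∀ i k, γ i k ∈ (C ⊔ P : Subfield K) := by
      intro i k
      refine sum_mem fun p hp => mul_mem ?_ (SetLike.le_def.mp le_sup_right (htP hp))
      have hle : (C ⊔ A ⊓ P : Subfield K) ≤ C ⊔ P :=
        sup_le le_sup_left (inf_le_right.trans le_sup_right)
      exact SetLike.le_def.mp hle (w _ k).2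
    have hxγ : ∀ i, x' i = ∑ k, γ i k * e k := by
      intro i
      rw [hrepT i]
      calc ∑ p ∈ t, ((c i) p : K) * p
          = ∑ p ∈ t, ∑ k, (w ((c i) p : K) k : K) * p * e k := by
            refine Finset.sum_congr rfl fun p hp => ?_
            conv_lhs => rw [hcw i p hp]
            rw [Finset.sum_mul]
            exact Finset.sum_congr rfl fun k _ => by ring
        _ = ∑ k, γ i k * e k := by
            rw [Finset.sum_comm]
            refine Finset.sum_congr rfl fun k _ => ?_
            simp only [hγ]
            rw [Finset.sum_mul]
    have heBP : LinearIndependent (B ⊔ P : Subfield K) e := h r e heA heli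
    set M : Matrix (Fin n) (Fin r) (C ⊔ P : Subfield K) :=
      fun i k => ⟨γ i k, hγCP i k⟩ with hM
    have hMli : LinearIndependent (C ⊔ P : Subfield K) (fun i => M i) := by
      rw [Fintype.linearIndependent_iff]
      intro μ hμ
      have hcoord : ∀ k, ∑ i, (μ i : K) * γ i k = 0 := by
        intro k
        have h1 := congrFun hμ k
        have h2 := congrArg Subtype.val h1
        simp only [Finset.sum_apply, Pi.smul_apply, AddSubmonoidClass.coe_finset_sum] at h2
        simpa [smul_eq_mul] using h2
      rw [Fintype.linearIndependent_iff] at hli'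
      apply hli' μ
      have : ∑ i, (μ i : K) * x' i = 0 := by
        calc ∑ i, (μ i : K) * x' i
            = ∑ i, ∑ k, (μ i : K) * (γ i k * e k) := by
              refine Finset.sum_congr rfl fun i _ => ?_
              rw [hxγ i, Finset.mul_sum]
          _ = ∑ k, (∑ i, (μ i : K) * γ i k) * e k := by
              rw [Finset.sum_comm]
              refine Finset.sum_congr rfl fun k _ => ?_
              rw [Finset.sum_mul]
              exact Finset.sum_congr rfl fun i _ => by ring
          _ = 0 := by
              refine Finset.sum_eq_zero fun k _ => ?_
              rw [hcoord k, zero_mul]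
      calc ∑ i, μ i • x' i = ∑ i, (μ i : K) * x' i := by
            refine Finset.sum_congr rfl fun i _ => ?_
            rw [Subfield.smul_def, smul_eq_mul]
        _ = 0 := this
    obtain ⟨N, hMN⟩ := matrix_right_inv M hMli
    have hMNK : ∀ i' i, ∑ k, γ i' k * (N k i : K) = if i' = i then 1 else 0 := by
      intro i' i
      have h1 := congrFun (congrFun hMN i') i
      have h2 := congrArg Subtype.val h1
      rw [Matrix.mul_apply] at h2
      simp only [AddSubmonoidClass.coe_finset_sum, Subfield.coe_mul] at h2
      rw [h2]
      rw [Matrix.one_apply]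
      split <;> simp
    rw [Fintype.linearIndependent_iff]
    intro g hg
    have hγBP : ∀ i k, γ i k ∈ (B ⊔ P : Subfield K) := by
      intro i k
      have hle : (C ⊔ P : Subfield K) ≤ B ⊔ P :=
        sup_le (hCB.trans le_sup_left) le_sup_right
      exact SetLike.le_def.mp hle (hγCP i k)
    have hcoefBP : ∀ k, ∑ i, (g i : K) * γ i k = 0 := by
      rw [Fintype.linearIndependent_iff] at heBP
      intro k
      have h0 : ∑ k', (⟨∑ i, (g i : K) * γ i k',
          sum_mem fun i _ => mul_mem (g i).2 (hγBP i k')⟩ : (B ⊔ P : Subfield K)) • e k'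
          = 0 := by
        have : ∑ k', (∑ i, (g i : K) * γ i k') * e k' = 0 := by
          calc ∑ k', (∑ i, (g i : K) * γ i k') * e k'
              = ∑ i, (g i : K) * x' i := by
                simp_rw [Finset.sum_mul]
                rw [Finset.sum_comm]
                refine Finset.sum_congr rfl fun i _ => ?_
                rw [hxγ i, Finset.mul_sum]
                exact Finset.sum_congr rfl fun k' _ => by ring
            _ = ∑ i, g i • x' i := by
                refine Finset.sum_congr rfl fun i _ => ?_
                rw [Subfield.smul_def, smul_eq_mul]
            _ = 0 := hg
        simpa [Subfield.smul_def, smul_eq_mul] using this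
      have := congrArg Subtype.val (heBP _ h0 k)
      simpa using this
    intro i
    have : (g i : K) = 0 := by
      calc (g i : K)
          = ∑ i', (g i' : K) * (if i' = i then 1 else 0) := by
            simp [Finset.sum_ite_eq]
        _ = ∑ i', (g i' : K) * (∑ k, γ i' k * (N k i : K)) := by
            exact Finset.sum_congr rfl fun i' _ => by rw [hMNK i' i]
        _ = ∑ k, (∑ i', (g i' : K) * γ i' k) * (N k i : K) := by
            simp_rw [Finset.mul_sum, Finset.sum_mul]
            rw [Finset.sum_comm]
            exact Finset.sum_congr rfl fun k _ =>
              Finset.sum_congr rfl fun i' _ => by ring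
        _ = 0 := by
            refine Finset.sum_eq_zero fun k _ => ?_
            rw [hcoefBP k, zero_mul]
    exact Subtype.ext this
end

section
/- Let A, B, C, P be subfields of a common field with C ⊆ A ∩ B, and suppose both A and B are linearly disjoint from P over A ∩ P and B ∩ P respectively ('D-closed'). If the compositum A.P is linearly disjoint from B.P over C.P, then the compositum A.B is linearly disjoint from P over (A∩P).(B∩P); in particular (A.B) ∩ P = (A∩P).(B∩P). -/
section

variable {K : Type*} [Field K]

theorem linearIndependent_subfield_iff {F : Subfield K} {ι : Type*} [Fintype ι] {v : ι → K} :
    LinearIndependent F v ↔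
      ∀ c : ι → K, (∀ i, c i ∈ F) → ∑ i, c i * v i = 0 → ∀ i, c i = 0 := by
  rw [Fintype.linearIndependent_iff]
  refine ⟨fun hv c hc hsum i => congrArg Subtype.val (hv (fun i => ⟨c i, hc i⟩) hsum i),
    fun hv g hg i => Subtype.ext (hv (fun i => g i) (fun i => (g i).2) hg i)⟩

namespace Subfield

theorem exists_linearIndependent_fin (F : Subfield K) {ι : Type*} [Finite ι] (v : ι → K) :
    ∃ (r : ℕ) (w : Fin r → K), (∀ l, w l ∈ Set.range v) ∧ LinearIndependent F w ∧
      ∀ i, v i ∈ Submodule.span F (Set.range w) := by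
  obtain ⟨b, hbv, hspan, hli⟩ := exists_linearIndependent F (Set.range v)
  have : Finite b := (Set.finite_range v).subset hbv
  let e := (Finite.equivFin b).symm
  refine ⟨_, Subtype.val ∘ e, fun l => hbv (e l).2, hli.comp e e.injective, fun i => ?_⟩
  rw [EquivLike.range_comp, Subtype.range_coe, hspan]
  exact Submodule.subset_span ⟨i, rfl⟩

theorem sup_eq_adjoin_toSubfield (W Y : Subfield K) :
    W ⊔ Y = (IntermediateField.adjoin W (Y : Set K)).toSubfield := by
  rw [IntermediateField.adjoin_toSubfield, Subfield.algebraMap_ofSubfield, Subfield.coe_subtype,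
    Subtype.range_coe, Subfield.closure_union, Subfield.closure_eq, Subfield.closure_eq]

theorem exists_ne_zero_mul_mem_adjoin_of_mem_sup (W Y : Subfield K) {x : K} (hx : x ∈ W ⊔ Y) :
    ∃ s ∈ Algebra.adjoin W (Y : Set K), s ≠ 0 ∧ s * x ∈ Algebra.adjoin W (Y : Set K) := by
  rw [sup_eq_adjoin_toSubfield] at hx
  obtain ⟨r, hr, s, hs, rfl⟩ := IntermediateField.mem_adjoin_iff_div.1 hx
  rcases eq_or_ne s 0 with rfl | hs0
  · exact ⟨1, Subalgebra.one_mem _, one_ne_zero, by simp⟩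
  · exact ⟨s, hs, hs0, by rwa [mul_div_cancel₀ r hs0]⟩

theorem exists_ne_zero_mul_mem_span_of_mem_sup (W Y : Subfield K) {ι : Type*} [Fintype ι]
    (c : ι → K) (hc : ∀ i, c i ∈ W ⊔ Y) :
    ∃ d ≠ 0, ∀ i, d * c i ∈ Submodule.span W (Y : Set K) := by
  classical
  choose s hs hs0 hsc using fun i => exists_ne_zero_mul_mem_adjoin_of_mem_sup W Y (hc i)
  refine ⟨∏ i, s i, Finset.prod_ne_zero_iff.2 fun i _ => hs0 i, fun i => ?_⟩
  have hmem : (∏ j, s j) * c i ∈ Algebra.adjoin W (Y : Set K) := by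
    rw [← Finset.prod_erase_mul _ _ (Finset.mem_univ i), mul_assoc]
    exact Subalgebra.mul_mem _ (Subalgebra.prod_mem _ fun j _ => hs j) (hsc i)
  rwa [← Subalgebra.mem_toSubmodule, Algebra.adjoin_eq_span,
    show Submonoid.closure (Y : Set K) = Y.toSubmonoid from Y.toSubmonoid.closure_eq] at hmem

theorem exists_linearIndependent_repr_of_mem_span (W E Y : Subfield K) {ι : Type*} [Fintype ι]
    (u : ι → K) (hu : ∀ i, u i ∈ Submodule.span W (Y : Set K)) :
    ∃ (r : ℕ) (y : Fin r → K) (e : ι → Fin r → K), (∀ l, y l ∈ Y) ∧ LinearIndependent E y ∧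
      (∀ i l, e i l ∈ W ⊔ E) ∧ ∀ i, u i = ∑ l, e i l * y l := by
  choose n f g hfg using fun i => Submodule.mem_span_set'.1 (hu i)
  obtain ⟨r, y, hyg, hy, hspan⟩ :=
    exists_linearIndependent_fin E fun k : Σ i, Fin (n i) => (g k.1 k.2 : K)
  choose φ hφ using fun k => (Submodule.mem_span_range_iff_exists_fun E).1 (hspan k)
  refine ⟨r, y, fun i l => ∑ j, (f i j : K) * φ ⟨i, j⟩ l, fun l => ?_, hy, fun i l => ?_,
    fun i => ?_⟩
  · obtain ⟨k, hk⟩ := hyg l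
    exact hk ▸ (g k.1 k.2).2
  · exact Subfield.sum_mem _ fun j _ =>
      Subfield.mul_mem _ (le_sup_left (α := Subfield K) (f i j).2)
        (le_sup_right (α := Subfield K) (φ ⟨i, j⟩ l).2)
  · rw [← hfg i]
    simp_rw [Subfield.smul_def, smul_eq_mul, ← hφ ⟨i, _⟩, Subfield.smul_def, smul_eq_mul,
      Finset.mul_sum, Finset.sum_mul, mul_assoc]
    exact Finset.sum_comm

end Subfield

namespace LinDisj

variable {X Y Z F W E M : Subfield K}

theorem refl : LinDisj K X F F := fun _ _ _ h => h

theorem mono_right (h : LinDisj K X Y F) (hY : Z ≤ Y) : LinDisj K X Z F := by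
  intro n a ha hF
  have hY' := linearIndependent_subfield_iff.1 (h n a ha hF)
  exact linearIndependent_subfield_iff.2 fun c hc => hY' c fun i => hY (hc i)

theorem trans (h : LinDisj K X Y F) (h' : LinDisj K Z W Y) (hXZ : X ≤ Z) : LinDisj K X W F :=
  fun n a ha hF => h' n a (fun i => hXZ (ha i)) (h n a ha hF)

theorem sup_right (h₁ : LinDisj K Y M E) (h₂ : LinDisj K Z (W ⊔ E) F)
    (hZ : Z ≤ M) (hW : W ≤ M) (hE : E ≤ M) : LinDisj K Z (W ⊔ Y) F := by
  intro n z hzZ hzF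
  have hzWE := linearIndependent_subfield_iff.1 (h₂ n z hzZ hzF)
  rw [linearIndependent_subfield_iff]
  intro c hc hsum
  obtain ⟨d, hd, hdc⟩ := Subfield.exists_ne_zero_mul_mem_span_of_mem_sup W Y c hc
  obtain ⟨r, y, e, hyY, hyE, he, hrepr⟩ :=
    Subfield.exists_linearIndependent_repr_of_mem_span W E Y _ hdc
  have hrel : ∑ l, (∑ i, e i l * z i) * y l = 0 := by
    calc ∑ l, (∑ i, e i l * z i) * y l = ∑ i, d * c i * z i := by
          simp_rw [hrepr, Finset.sum_mul, mul_right_comm _ (z _)]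
          exact Finset.sum_comm
      _ = 0 := by simp_rw [mul_assoc, ← Finset.mul_sum, hsum, mul_zero]
  have hcol := linearIndependent_subfield_iff.1 (h₁ r y hyY hyE) _
    (fun l => M.sum_mem fun i _ => M.mul_mem (sup_le hW hE (he i l)) (hZ (hzZ i))) hrel
  intro i
  have hdci : d * c i = 0 := by
    simp [hrepr, fun l => hzWE (e · l) (fun i => he i l) (hcol l)]
  exact (mul_eq_zero.1 hdci).resolve_left hd

theorem symm (h : LinDisj K X Y F) (hF : F ≤ Y) : LinDisj K Y X F := by
  simpa using sup_right (W := ⊥) h (by simpa using refl) le_rfl bot_le hF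

theorem inf_le (h : LinDisj K X Y F) : X ⊓ Y ≤ F := by
  intro x hx
  by_contra hxF
  have hli : LinearIndependent F ![1, x] := by
    rw [linearIndependent_subfield_iff]
    intro c hc hsum
    simp only [Fin.sum_univ_two, Matrix.cons_val_zero, Matrix.cons_val_one, mul_one] at hsum
    have hc1 : c 1 = 0 := by
      by_contra hc1
      have hx : x = -c 0 / c 1 := by
        field_simp
        linear_combination hsum
      exact hxF (hx ▸ F.div_mem (F.neg_mem (hc 0)) (hc 1))
    intro i
    fin_cases i
    · simpa [hc1] using hsum
    · exact hc1
  have := linearIndependent_subfield_iff.1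
    (h 2 ![1, x] (fun i => by fin_cases i <;> simp [X.one_mem, (Subfield.mem_inf.1 hx).1]) hli)
    ![x, -1] (fun i => by fin_cases i <;> simp [Y.one_mem, (Subfield.mem_inf.1 hx).2]) (by simp) 1
  simp at this

end LinDisj

end

/-- If `A` and `B` are D-closed and `A.P` is linearly disjoint from `B.P` over `C.P`, then
`A.B` is linearly disjoint from `P` over `(A∩P).(B∩P)`; in particular
`(A.B) ∩ P = (A∩P).(B∩P)`. -/
theorem stmt14 (K : Type*) [Field K] (A B C P : Subfield K) (hCA : C ≤ A) (hCB : C ≤ B)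
    (hA : LinDisj K A P (A ⊓ P)) (hB : LinDisj K B P (B ⊓ P))
    (h : LinDisj K (A ⊔ P) (B ⊔ P) (C ⊔ P)) :
    LinDisj K (A ⊔ B) P ((A ⊓ P) ⊔ (B ⊓ P)) ∧ (A ⊔ B) ⊓ P = (A ⊓ P) ⊔ (B ⊓ P) := by
  have hAC : LinDisj K A (C ⊔ P) (C ⊔ A ⊓ P) :=
    (hA.symm inf_le_right).sup_right LinDisj.refl le_rfl hCA inf_le_left
  have hPB : LinDisj K P (A ⊓ P ⊔ B) (A ⊓ P ⊔ B ⊓ P) :=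
    hB.sup_right LinDisj.refl le_rfl inf_le_right inf_le_right
  have hPBA : LinDisj K P (B ⊔ A) (A ⊓ P ⊔ B ⊓ P) :=
    (hAC.trans h le_sup_left).sup_right
      (hPB.mono_right (sup_le le_sup_right (sup_le (hCB.trans le_sup_right) le_sup_left)))
      le_sup_right le_sup_left (sup_le (hCB.trans le_sup_left) (inf_le_right.trans le_sup_right))
  have hQ : A ⊓ P ⊔ B ⊓ P ≤ A ⊔ B :=
    sup_le (inf_le_left.trans le_sup_left) (inf_le_left.trans le_sup_right)
  have hABP : LinDisj K (A ⊔ B) P (A ⊓ P ⊔ B ⊓ P) := (hPBA.mono_right (sup_comm A B).le).symm hQ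
  exact ⟨hABP, le_antisymm hABP.inf_le (le_inf hQ (sup_le inf_le_right inf_le_right))⟩
end

section
/- Let N be an algebraically closed field with a distinguished subfield P_N, and suppose the transcendence degree of N over P_N is at least κ for an infinite cardinal κ. Let A, A' ⊆ N be subsets of cardinality < κ, and let f : P_N(A) → P_N(A') be a field isomorphism whose restriction to P_N is a field automorphism of P_N. Then f extends to a field automorphism of N. -/
universe u

/-- The transcendence degree of the subfield `F` over the subfield `P` inside `K`:
the supremum of the cardinalities of subsets of `F` that are algebraically
independent over `P`. -/
noncomputable def trdeg {K : Type u} [Field K] (P F : Subfield K) : Cardinal.{u} :=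
  ⨆ s : {s : Set K // s ⊆ (F : Set K) ∧ AlgebraicIndependent P (Subtype.val : s → K)},
    Cardinal.mk s.1

open Cardinal Set

theorem trdeg_top_eq_algebra_trdeg {N : Type u} [Field N] (P : Subfield N) :
    trdeg P ⊤ = Algebra.trdeg P N :=
  (Equiv.subtypeEquivRight fun s => by simp [AlgebraicIndepOn]).iSup_congr fun _ => rfl

theorem Algebra.trdeg_adjoin_le {K A : Type*} [CommRing K] [CommRing A] [Algebra K A]
    [IsDomain K] (s : Set A) : Algebra.trdeg K (Algebra.adjoin K s) ≤ #s := by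
  rw [Algebra.adjoin_eq_range]
  have := lift_trdeg_le_of_surjective (MvPolynomial.aeval (R := K) ((↑) : s → A)).rangeRestrict
    (AlgHom.rangeRestrict_surjective _)
  simpa using this

namespace IntermediateField

open scoped algebraAdjoinAdjoin

variable {K L : Type*} [Field K] [Field L] [Algebra K L]

theorem trdeg_adjoin_le (s : Set L) : Algebra.trdeg K (adjoin K s) ≤ #s := by
  rw [← trdeg_add_eq K (Algebra.adjoin K s) (A := adjoin K s),
    trdeg_eq_zero (R := Algebra.adjoin K s), add_zero]
  exact Algebra.trdeg_adjoin_le s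

theorem trdeg_adjoin_eq_of_lt {s : Set L} (hinf : ℵ₀ ≤ Algebra.trdeg K L)
    (hs : #s < Algebra.trdeg K L) : Algebra.trdeg (adjoin K s) L = Algebra.trdeg K L :=
  eq_of_add_eq_of_aleph0_le (trdeg_add_eq K (adjoin K s) (A := L))
    ((trdeg_adjoin_le s).trans_lt hs) hinf

end IntermediateField

theorem Subfield.sup_closure_eq_adjoin_toSubfield {N : Type*} [Field N] (P : Subfield N)
    (s : Set N) : P ⊔ Subfield.closure s = (IntermediateField.adjoin P s).toSubfield := by
  have hP : range (algebraMap P N) = P := Subtype.range_val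
  rw [IntermediateField.adjoin_toSubfield, Subfield.closure_union, hP, Subfield.closure_eq]

theorem Subfield.trdeg_sup_closure_eq {N : Type*} [Field N] (P : Subfield N) {s : Set N}
    (hinf : ℵ₀ ≤ Algebra.trdeg P N) (hs : #s < Algebra.trdeg P N) :
    Algebra.trdeg ↥(P ⊔ Subfield.closure s) N = Algebra.trdeg P N := by
  rw [sup_closure_eq_adjoin_toSubfield]
  exact IntermediateField.trdeg_adjoin_eq_of_lt hinf hs

namespace AlgebraicIndependent

variable {ι ι' K K' A : Type*} [CommRing K] [CommRing K'] [CommRing A] [Algebra K A]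
  [Algebra K' A] {x : ι → A} {y : ι' → A}

noncomputable def adjoinRingEquiv (hx : AlgebraicIndependent K x)
    (hy : AlgebraicIndependent K' y) (f : K ≃+* K') (e : ι ≃ ι') :
    Algebra.adjoin K (range x) ≃+* Algebra.adjoin K' (range y) :=
  hx.aevalEquiv.symm.toRingEquiv.trans <|
    ((MvPolynomial.mapEquiv ι f).trans (MvPolynomial.renameEquiv K' e).toRingEquiv).trans
      hy.aevalEquiv.toRingEquiv

theorem adjoinRingEquiv_algebraMap (hx : AlgebraicIndependent K x)
    (hy : AlgebraicIndependent K' y) (f : K ≃+* K') (e : ι ≃ ι') (a : K) :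
    hx.adjoinRingEquiv hy f e (algebraMap K _ a) = algebraMap K' _ (f a) := by
  show hy.aevalEquiv (MvPolynomial.rename e (MvPolynomial.map (f : K →+* K')
    (hx.aevalEquiv.symm (algebraMap K _ a)))) = _
  rw [AlgEquiv.commutes, MvPolynomial.algebraMap_eq, MvPolynomial.map_C, MvPolynomial.rename_C,
    ← MvPolynomial.algebraMap_eq, AlgEquiv.commutes]
  rfl

end AlgebraicIndependent

theorem IsAlgClosed.exists_ringEquiv_extend_of_trdeg_eq {K K' N : Type*} [Field K] [Field K']
    [Field N] [IsAlgClosed N] [Algebra K N] [Algebra K' N] (f : K ≃+* K')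
    (h : Algebra.trdeg K N = Algebra.trdeg K' N) :
    ∃ σ : N ≃+* N, ∀ a, σ (algebraMap K N a) = algebraMap K' N (f a) := by
  obtain ⟨s, hs⟩ := exists_isTranscendenceBasis K N
  obtain ⟨t, ht⟩ := exists_isTranscendenceBasis K' N
  obtain ⟨e⟩ : Nonempty (s ≃ t) := Cardinal.eq.mp <| by
    rw [hs.cardinalMk_eq_trdeg, ht.cardinalMk_eq_trdeg, h]
  have : IsAlgClosure (Algebra.adjoin K (range ((↑) : s → N))) N := ⟨‹_›, hs.isAlgebraic⟩
  have : IsAlgClosure (Algebra.adjoin K' (range ((↑) : t → N))) N := ⟨‹_›, ht.isAlgebraic⟩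
  refine ⟨IsAlgClosure.equivOfEquiv N N (hs.1.adjoinRingEquiv ht.1 f e), fun a => ?_⟩
  rw [IsScalarTower.algebraMap_apply K (Algebra.adjoin K (range ((↑) : s → N))) N,
    IsAlgClosure.equivOfEquiv_algebraMap, AlgebraicIndependent.adjoinRingEquiv_algebraMap,
    ← IsScalarTower.algebraMap_apply]

theorem stmt15_general (N : Type u) [Field N] [IsAlgClosed N] (PN : Subfield N)
    (κ : Cardinal.{u}) (hκ : Cardinal.aleph0 ≤ κ) (htr : κ ≤ trdeg PN ⊤)
    (A A' : Set N) (hA : Cardinal.mk A < κ) (hA' : Cardinal.mk A' < κ)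
    (f : ↥(PN ⊔ Subfield.closure A) ≃+* ↥(PN ⊔ Subfield.closure A')) :
    ∃ σ : N ≃+* N, ∀ (x : N) (hx : x ∈ PN ⊔ Subfield.closure A),
      σ x = (f ⟨x, hx⟩ : N) := by
  rw [trdeg_top_eq_algebra_trdeg] at htr
  have trdeg_eq : ∀ B : Set N, #B < κ →
      Algebra.trdeg ↥(PN ⊔ Subfield.closure B) N = Algebra.trdeg PN N :=
    fun B hB => PN.trdeg_sup_closure_eq (hκ.trans htr) (hB.trans_le htr)
  obtain ⟨σ, hσ⟩ := IsAlgClosed.exists_ringEquiv_extend_of_trdeg_eq f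
    ((trdeg_eq A hA).trans (trdeg_eq A' hA').symm)
  exact ⟨σ, fun x hx => hσ ⟨x, hx⟩⟩

/-- An isomorphism `P_N(A) → P_N(A')` restricting to an automorphism of `P_N` extends to an
automorphism of `N`, provided `trdeg(N/P_N) ≥ κ > |A|, |A'|`. -/
theorem stmt15 (N : Type u) [Field N] [IsAlgClosed N] (PN : Subfield N)
    (κ : Cardinal.{u}) (hκ : Cardinal.aleph0 ≤ κ) (htr : κ ≤ trdeg PN ⊤)
    (A A' : Set N) (hA : Cardinal.mk A < κ) (hA' : Cardinal.mk A' < κ)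
    (f : ↥(PN ⊔ Subfield.closure A) ≃+* ↥(PN ⊔ Subfield.closure A'))
    (hfP : ∀ (x : N) (hx : x ∈ PN),
      (f ⟨x, SetLike.le_def.mp le_sup_left hx⟩ : N) ∈ PN)
    (hfPsurj : ∀ y ∈ PN, ∃ (x : N) (hx : x ∈ PN),
      (f ⟨x, SetLike.le_def.mp le_sup_left hx⟩ : N) = y) :
    ∃ σ : N ≃+* N, ∀ (x : N) (hx : x ∈ PN ⊔ Subfield.closure A),
      σ x = (f ⟨x, hx⟩ : N) :=
  stmt15_general N PN κ hκ htr A A' hA hA' f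
end
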